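/- Let R_1, …, R_n and Q_1, …, Q_m be families of nonzero non-unital rings whose underlying additive groups are torsion-free and finitely generated. Assume that for every i and j the ℚ-algebras R_i ⊗_ℤ ℚ and Q_j ⊗_ℤ ℚ are indecomposable non-unital ℚ-algebras, and that for every prime p the (ℤ/pℤ)-algebras R_i ⊗_ℤ (ℤ/pℤ) and Q_j ⊗_ℤ (ℤ/pℤ) are indecomposable non-unital (ℤ/pℤ)-algebras. If the product rings R_1 × ⋯ × R_n and Q_1 × ⋯ × Q_m are isomorphic as non-unital rings, then n = m and there exists a bijection σ : {1,…,n} → {1,…,m} such that R_i is isomorphic to Q_{σ(i)} as a non-unital ring for every i. -/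

import Mathlib

open TensorProduct

/-- A bundled non-unital (associative) `k`-algebra: a `k`-module with an
associative `k`-bilinear multiplication (no unit required). -/
structure NuAlgebra (k : Type) [CommRing k] : Type 1 where
  carrier : Type
  [instNonUnitalRing : NonUnitalRing carrier]
  [instModule : Module k carrier]
  [instSMulCommClass : SMulCommClass k carrier carrier]
  [instIsScalarTower : IsScalarTower k carrier carrier]

attribute [instance] NuAlgebra.instNonUnitalRing NuAlgebra.instModule
  NuAlgebra.instSMulCommClass NuAlgebra.instIsScalarTower

/-- Two non-unital `k`-algebras are isomorphic if there is a multiplicative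
`k`-linear equivalence between them. -/
def NuAlgIso (k : Type) [CommRing k] (A B : Type)
    [NonUnitalRing A] [Module k A] [NonUnitalRing B] [Module k B] : Prop :=
  ∃ e : A ≃ₗ[k] B, ∀ x y : A, e (x * y) = e x * e y

/-- A non-unital `k`-algebra is decomposable if it is isomorphic, as a non-unital
`k`-algebra, to a product (with componentwise operations) of two nonzero
non-unital `k`-algebras; indecomposable otherwise. -/
def IsDecomposableAlg (k : Type) [CommRing k] (A : Type)
    [NonUnitalRing A] [Module k A] : Prop :=
  ∃ B C : NuAlgebra k, Nontrivial B.carrier ∧ Nontrivial C.carrier ∧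
    NuAlgIso k A (B.carrier × C.carrier)

/-- A monoid is torsion-free if no nontrivial element has finite order
(the definition `AddMonoid.IsTorsionFree` of the older Mathlib, since removed). -/
def AddMonoid.IsTorsionFree (G : Type*) [AddMonoid G] : Prop :=
  ∀ g : G, g ≠ 0 → ¬IsOfFinAddOrder g

/-!
The centroid of a ring `A` (the additive endomorphisms `f` with `f (x * y) = x * f y = f x * y`)
controls how `A` splits: a pair of complementary two-sided ideals is a decomposition. By Fitting's
lemma, a centroid element `f` of a finite-dimensional algebra splits it as `ker fⁿ ⊕ range fⁿ`
into ideals, so for an indecomposable algebra `f` is a unit or nilpotent and the centroid is a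
local ring.

Given `φ : ∏ Rᵢ ≃ ∏ Qⱼ` and an index `i` with `Rᵢ² ≠ 0`, passing from `Rᵢ` to `Qⱼ` and back through
`φ` gives centroid elements `cⱼ` of `Rᵢ` with `∑ cⱼ = 1` and `cⱼ x * cⱼ' y = 0` for `j ≠ j'`.
After tensoring with `ℚ`, locality provides a unit `cⱼ₀`; the orthogonality and `Rᵢ² ≠ 0` make every
other `cⱼ` a non-unit, so `1 - cⱼ₀ = ∑_{j ≠ j₀} cⱼ` is nilpotent. Nilpotency descends to `ℤ` since
`Rᵢ` is torsion-free, hence `cⱼ₀` is a unit of the integral centroid. Then `Qⱼ₀ → Rᵢ` is bijective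
(an idempotent of the centroid of `Qⱼ₀` is trivial), the complementary factors are isomorphic, and
induction on the number of factors applies. If all factors have zero multiplication, each of them
has rank one and the claim is a count of ranks.
-/

section Centroid

variable (k : Type*) [CommRing k] (A : Type*) [NonUnitalRing A] [Module k A]
  [SMulCommClass k A A] [IsScalarTower k A A]

def centroid : Subalgebra k (Module.End k A) :=
  Subalgebra.centralizer k (Set.range (LinearMap.mulLeft k) ∪ Set.range (LinearMap.mulRight k))

variable {k A}

theorem mem_centroid {f : Module.End k A} :
    f ∈ centroid k A ↔ ∀ x y : A, f (x * y) = x * f y ∧ f (x * y) = f x * y := by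
  simp only [centroid, Subalgebra.mem_centralizer_iff, Set.mem_union, or_imp, forall_and,
    Set.forall_mem_range, LinearMap.ext_iff, Module.End.mul_apply, LinearMap.mulLeft_apply,
    LinearMap.mulRight_apply]
  grind

end Centroid

section Decomposition

variable {k : Type} [CommRing k] {A : Type} [NonUnitalRing A] [Module k A]

def Submodule.IsMulIdeal (I : Submodule k A) : Prop :=
  ∀ x y : A, x ∈ I → x * y ∈ I ∧ y * x ∈ I

theorem Submodule.IsMulIdeal.mul_eq_zero {I J : Submodule k A} (hI : I.IsMulIdeal)
    (hJ : J.IsMulIdeal) (h : Disjoint I J) {x y : A} (hx : x ∈ I) (hy : y ∈ J) : x * y = 0 :=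
  (Submodule.disjoint_def.mp h) _ (hI x y hx).1 (hJ y x hy).2

variable [SMulCommClass k A A] [IsScalarTower k A A]

def Submodule.IsMulIdeal.toNuAlgebra {I : Submodule k A} (hI : I.IsMulIdeal) : NuAlgebra k :=
  ⟨I.toNonUnitalSubalgebra fun x y hx _ => (hI x y hx).1⟩

theorem isDecomposableAlg_of_isCompl {I J : Submodule k A} (hI : I.IsMulIdeal)
    (hJ : J.IsMulIdeal) (h : IsCompl I J) (hI0 : I ≠ ⊥) (hJ0 : J ≠ ⊥) :
    IsDecomposableAlg k A := by
  let e : (hI.toNuAlgebra.carrier × hJ.toNuAlgebra.carrier) ≃ₗ[k] A :=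
    Submodule.prodEquivOfIsCompl I J h
  have he : ∀ p q, e (p * q) = e p * e q := by
    rintro ⟨⟨a, ha⟩, ⟨b, hb⟩⟩ ⟨⟨a', ha'⟩, ⟨b', hb'⟩⟩
    change a * a' + b * b' = (a + b) * (a' + b')
    rw [add_mul, mul_add, mul_add, hI.mul_eq_zero hJ h.disjoint ha hb',
      hJ.mul_eq_zero hI h.disjoint.symm hb ha']
    abel
  refine ⟨hI.toNuAlgebra, hJ.toNuAlgebra, Submodule.nontrivial_iff_ne_bot.2 hI0,
    Submodule.nontrivial_iff_ne_bot.2 hJ0, e.symm, fun x y => e.injective ?_⟩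
  rw [he, LinearEquiv.apply_symm_apply, LinearEquiv.apply_symm_apply, LinearEquiv.apply_symm_apply]

end Decomposition

theorem finrank_le_one_of_mul_eq_zero {K V : Type} [Field K] [NonUnitalRing V] [Module K V]
    [SMulCommClass K V V] [IsScalarTower K V V] (hV : ¬IsDecomposableAlg K V)
    (hmul : ∀ x y : V, x * y = 0) : Module.finrank K V ≤ 1 := by
  by_contra! h
  have := Module.nontrivial_of_finrank_pos (R := K) (M := V) (by omega)
  obtain ⟨v, hv⟩ := exists_ne (0 : V)
  obtain ⟨J, hJ⟩ := (K ∙ v).exists_isCompl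
  have hideal : ∀ I : Submodule K V, I.IsMulIdeal := fun I x y _ => by
    simp [hmul, I.zero_mem]
  refine hV (isDecomposableAlg_of_isCompl (hideal _) (hideal J) hJ
    (by simpa using hv) fun hJ0 => ?_)
  have := finrank_span_singleton (K := K) hv
  rw [eq_top_of_isCompl_bot (hJ0 ▸ hJ : IsCompl (K ∙ v) ⊥), finrank_top] at this
  omega

namespace centroid

variable {k : Type} [CommRing k] {A : Type} [NonUnitalRing A] [Module k A]
  [SMulCommClass k A A] [IsScalarTower k A A] {f : Module.End k A}

theorem isMulIdeal_ker (hf : f ∈ centroid k A) : (LinearMap.ker f).IsMulIdeal := by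
  intro x y hx
  rw [LinearMap.mem_ker] at hx
  rw [LinearMap.mem_ker, LinearMap.mem_ker, (mem_centroid.1 hf x y).2,
    (mem_centroid.1 hf y x).1, hx, zero_mul, mul_zero]
  exact ⟨rfl, rfl⟩

theorem isMulIdeal_range (hf : f ∈ centroid k A) : (LinearMap.range f).IsMulIdeal := by
  rintro _ y ⟨x, rfl⟩
  exact ⟨⟨x * y, (mem_centroid.1 hf x y).2⟩, ⟨y * x, (mem_centroid.1 hf y x).1⟩⟩

theorem isUnit_iff {f : centroid k A} : IsUnit f ↔ IsUnit (f : Module.End k A) := by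
  refine ⟨fun h => h.map (centroid k A).val, fun ⟨u, hu⟩ => ?_⟩
  have hinv : (↑u⁻¹ : Module.End k A) ∈ centroid k A :=
    (Subalgebra.mem_centralizer_iff k).2 fun g hg =>
      (Commute.units_inv_right (hu ▸ (Subalgebra.mem_centralizer_iff k).1 f.2 g hg)).eq
  refine ⟨⟨f, ⟨_, hinv⟩, Subtype.ext ?_, Subtype.ext ?_⟩, rfl⟩
  · change (f : Module.End k A) * ↑u⁻¹ = 1
    rw [← hu, u.mul_inv]
  · change ↑u⁻¹ * (f : Module.End k A) = 1
    rw [← hu, u.inv_mul]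

theorem not_isUnit_mul {c d : centroid k A}
    (hdc : ∀ x y, (d : Module.End k A) x * (c : Module.End k A) y = 0)
    (hmul : ∃ x y : A, x * y ≠ 0) : ¬IsUnit (c * d) := by
  obtain ⟨x, y, hxy⟩ := hmul
  intro hu
  have hkill : (c * d : Module.End k A) (x * y) = 0 := by
    rw [Module.End.mul_apply, (mem_centroid.1 d.2 x y).2,
      (mem_centroid.1 c.2 ((d : Module.End k A) x) y).1, hdc]
  exact hxy (((Module.End.isUnit_iff _).1 (isUnit_iff.1 hu)).1
    (hkill.trans (map_zero _).symm))

variable [IsArtinian k A] [IsNoetherian k A]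

theorem isUnit_or_isNilpotent_of_mem (hA : ¬IsDecomposableAlg k A) (hf : f ∈ centroid k A) :
    IsUnit f ∨ IsNilpotent f := by
  obtain ⟨n, hcompl, hn⟩ :=
    (f.eventually_isCompl_ker_pow_range_pow.and (Filter.eventually_ge_atTop 1)).exists
  have hfn : f ^ n ∈ centroid k A := pow_mem hf n
  by_cases hker : LinearMap.ker (f ^ n) = ⊥
  · refine .inl ((isUnit_pow_iff (Nat.one_le_iff_ne_zero.1 hn)).1 ?_)
    exact (Module.End.isUnit_iff _).2
      (IsArtinian.bijective_of_injective_endomorphism _ (LinearMap.ker_eq_bot.1 hker))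
  by_cases hrange : LinearMap.range (f ^ n) = ⊥
  · exact .inr ⟨n, LinearMap.range_eq_bot.1 hrange⟩
  exact (hA (isDecomposableAlg_of_isCompl (isMulIdeal_ker hfn) (isMulIdeal_range hfn) hcompl
    hker hrange)).elim

theorem isUnit_or_isNilpotent (hA : ¬IsDecomposableAlg k A) (f : centroid k A) :
    IsUnit f ∨ IsNilpotent f :=
  (isUnit_or_isNilpotent_of_mem hA f.2).imp isUnit_iff.2
    (IsNilpotent.map_iff (f := (centroid k A).val) Subtype.val_injective).1

theorem isLocalRing [Nontrivial A] (hA : ¬IsDecomposableAlg k A) : IsLocalRing (centroid k A) :=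
  IsLocalRing.of_isUnit_or_isUnit_one_sub_self fun f =>
    (isUnit_or_isNilpotent hA f).imp id IsNilpotent.isUnit_one_sub

theorem eq_zero_or_one_of_isIdempotentElem (hA : ¬IsDecomposableAlg k A) {e : centroid k A}
    (he : IsIdempotentElem e) : e = 0 ∨ e = 1 :=
  (isUnit_or_isNilpotent hA e).symm.imp he.eq_zero_of_isNilpotent
    fun hu => (IsIdempotentElem.iff_eq_one_of_isUnit hu).1 he

theorem exists_isNilpotent_one_sub [Nontrivial A] (hA : ¬IsDecomposableAlg k A)
    (hmul : ∃ x y : A, x * y ≠ 0) {ι : Type*} [Fintype ι] [DecidableEq ι] (c : ι → centroid k A)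
    (hsum : ∑ i, c i = 1)
    (horth : ∀ i j, i ≠ j → ∀ x y, (c i : Module.End k A) x * (c j : Module.End k A) y = 0) :
    ∃ i, IsNilpotent (1 - c i) := by
  have := isLocalRing hA
  obtain ⟨i, -, hi⟩ := IsLocalRing.exists_of_isUnit_sum (hsum ▸ isUnit_one)
  refine ⟨i, (isUnit_or_isNilpotent hA _).resolve_left ?_⟩
  rw [← hsum, ← Finset.sum_erase_add _ _ (Finset.mem_univ i), add_sub_cancel_right]
  refine (IsLocalRing.nonunitsAddSubmonoid _).sum_mem fun j hj hu => ?_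
  exact not_isUnit_mul (horth i j (Finset.ne_of_mem_erase hj).symm) hmul (hu.mul hi)

end centroid

section BaseChange

variable {k : Type*} [CommRing k] {A : Type*} [NonUnitalRing A] [Module k A]
  [SMulCommClass k A A] [IsScalarTower k A A] (K : Type*) [CommRing K] [Algebra k K]

theorem LinearMap.baseChange_map_mul {f g h : Module.End k A}
    (hfgh : ∀ x y, f (x * y) = g x * h y) (u v : K ⊗[k] A) :
    f.baseChange K (u * v) = g.baseChange K u * h.baseChange K v := by
  induction u with
  | zero => simp
  | add u u' hu hu' => simp [add_mul, hu, hu']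
  | tmul a x =>
    induction v with
    | zero => simp
    | add v v' hv hv' => simp [mul_add, hv, hv']
    | tmul b y => simp [Algebra.TensorProduct.tmul_mul_tmul, hfgh]

theorem baseChange_mem_centroid {f : Module.End k A} (hf : f ∈ centroid k A) :
    f.baseChange K ∈ centroid K (K ⊗[k] A) := by
  refine mem_centroid.2 fun u v => ⟨?_, ?_⟩
  · simpa using LinearMap.baseChange_map_mul K (g := 1) (mem_centroid.1 hf · · |>.1) u v
  · simpa using LinearMap.baseChange_map_mul K (h := 1) (mem_centroid.1 hf · · |>.2) u v

def centroidBaseChange : centroid k A →+* centroid K (K ⊗[k] A) :=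
  ((Module.End.baseChangeHom k K A).comp (centroid k A).val).toRingHom.codRestrict _
    fun f => baseChange_mem_centroid K f.2

@[simp]
theorem coe_centroidBaseChange (f : centroid k A) :
    (centroidBaseChange K f : Module.End K (K ⊗[k] A)) = (f : Module.End k A).baseChange K :=
  rfl

theorem centroidBaseChange_injective [FaithfulSMul k K] [Module.Flat k A] :
    Function.Injective (centroidBaseChange (k := k) (A := A) K) := fun _ _ h =>
  Subtype.ext (LinearMap.baseChangeHom_injective k A K (congrArg Subtype.val h))

end BaseChange

structure IsIndecomposableLattice (A : Type) [NonUnitalRing A] : Prop where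
  nontrivial : Nontrivial A
  isAddTorsionFree : IsAddTorsionFree A
  finite : Module.Finite ℤ A
  not_isDecomposableAlg : ¬IsDecomposableAlg ℚ (ℚ ⊗[ℤ] A)

namespace IsIndecomposableLattice

variable {A : Type} [NonUnitalRing A] (hA : IsIndecomposableLattice A)
include hA

theorem mk_one_injective : Function.Injective (TensorProduct.mk ℤ ℚ A 1) :=
  have := hA.isAddTorsionFree
  Module.Flat.tensorProduct_mk_injective ℤ A ℚ

theorem nontrivial_baseChange : Nontrivial (ℚ ⊗[ℤ] A) :=
  have := hA.nontrivial
  hA.mk_one_injective.nontrivial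

theorem exists_mul_ne_zero_baseChange (hmul : ∃ x y : A, x * y ≠ 0) :
    ∃ u v : ℚ ⊗[ℤ] A, u * v ≠ 0 := by
  obtain ⟨x, y, hxy⟩ := hmul
  refine ⟨1 ⊗ₜ x, 1 ⊗ₜ y, ?_⟩
  rw [Algebra.TensorProduct.tmul_mul_tmul, one_mul]
  exact fun h => hxy (hA.mk_one_injective (h.trans (TensorProduct.tmul_zero A 1).symm))

theorem centroidBaseChange_injective :
    Function.Injective (centroidBaseChange (k := ℤ) (A := A) ℚ) :=
  have := hA.isAddTorsionFree
  _root_.centroidBaseChange_injective ℚ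

theorem exists_isUnit_of_sum_eq_one (hmul : ∃ x y : A, x * y ≠ 0) {ι : Type*} [Fintype ι]
    [DecidableEq ι] (c : ι → centroid ℤ A) (hsum : ∑ i, c i = 1)
    (horth : ∀ i j, i ≠ j → ∀ x y, (c i : Module.End ℤ A) x * (c j : Module.End ℤ A) y = 0) :
    ∃ i, IsUnit (c i) := by
  have := hA.finite
  have := hA.nontrivial_baseChange
  obtain ⟨i, hi⟩ := centroid.exists_isNilpotent_one_sub hA.not_isDecomposableAlg
    (hA.exists_mul_ne_zero_baseChange hmul) (fun i => centroidBaseChange ℚ (c i))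
    (by rw [← map_sum, hsum, map_one]) fun i j hij u v => by
      simpa using (LinearMap.baseChange_map_mul ℚ (f := 0) (horth i j hij · · |>.symm) u v).symm
  have hi' : IsNilpotent (centroidBaseChange ℚ (1 - c i)) := by rwa [map_sub, map_one]
  exact ⟨i, by
    simpa using ((IsNilpotent.map_iff hA.centroidBaseChange_injective).1 hi').isUnit_one_sub⟩

theorem eq_zero_or_one_of_isIdempotentElem {e : centroid ℤ A} (he : IsIdempotentElem e) :
    e = 0 ∨ e = 1 := by
  have := hA.finite
  refine (centroid.eq_zero_or_one_of_isIdempotentElem hA.not_isDecomposableAlg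
    (he.map (centroidBaseChange ℚ))).imp (fun h => ?_) fun h => ?_
  · exact hA.centroidBaseChange_injective (h.trans (map_zero _).symm)
  · exact hA.centroidBaseChange_injective (h.trans (map_one _).symm)

theorem finrank_eq_one_of_mul_eq_zero (hmul : ∀ x y : A, x * y = 0) :
    Module.finrank ℤ A = 1 := by
  have := hA.finite
  have := hA.isAddTorsionFree
  have := hA.nontrivial
  refine le_antisymm ?_ Module.finrank_pos
  rw [← Module.finrank_baseChange (R := ℚ)]
  refine finrank_le_one_of_mul_eq_zero hA.not_isDecomposableAlg fun u v => ?_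
  simpa using (LinearMap.baseChange_map_mul ℚ (f := 0) (g := 1) (h := 1)
    (fun x y => (hmul x y).symm) u v).symm

end IsIndecomposableLattice

namespace RingEquiv

def piSplitAt {ι : Type*} [DecidableEq ι] (i : ι) (R : ι → Type*) [∀ i, NonUnitalRing (R i)] :
    (Π j, R j) ≃+* R i × Π j : {j // j ≠ i}, R j :=
  { Equiv.piSplitAt i R with
    map_mul' := fun _ _ => rfl
    map_add' := fun _ _ => rfl }

theorem piSplitAt_symm_apply_zero {ι : Type*} [DecidableEq ι] {i : ι} {R : ι → Type*}
    [∀ i, NonUnitalRing (R i)] (x : R i) : (piSplitAt i R).symm (x, 0) = Pi.single i x := by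
  change (Equiv.piSplitAt i R).symm (x, 0) = Pi.single i x
  ext j
  by_cases h : j = i
  · subst h; simp
  · simp [h]

theorem nonempty_cancel_left {A B C D : Type*} [NonUnitalRing A] [NonUnitalRing B]
    [NonUnitalRing C] [NonUnitalRing D] (Φ : A × B ≃+* C × D)
    (h : Function.Bijective fun c : C => (Φ.symm (c, 0)).1) : Nonempty (B ≃+* D) := by
  let f : B →ₙ+* D := (NonUnitalRingHom.snd C D).comp
    (Φ.toNonUnitalRingHom.comp ((0 : B →ₙ+* A).prod (NonUnitalRingHom.id B)))
  have hf : ∀ b, f b = (Φ (0, b)).2 := fun _ => rfl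
  refine ⟨RingEquiv.ofBijective f ⟨(injective_iff_map_eq_zero f).2 fun b hb => ?_, fun y => ?_⟩⟩
  · have hb' : ((0 : A), b) = Φ.symm ((Φ (0, b)).1, 0) := Φ.eq_symm_apply.2 (Prod.ext rfl hb)
    have hc : (Φ (0, b)).1 = 0 :=
      h.1 (by simpa [Prod.mk_zero_zero] using congrArg Prod.fst hb'.symm)
    simpa [hc, Prod.mk_zero_zero] using congrArg Prod.snd hb'
  · obtain ⟨c, hc⟩ := h.2 (Φ.symm (0, y)).1
    refine ⟨(Φ.symm (0, y)).2 - (Φ.symm (c, 0)).2, ?_⟩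
    have hsub : ((0 : A), (Φ.symm (0, y)).2 - (Φ.symm (c, 0)).2) = Φ.symm ((0, y) - (c, 0)) := by
      rw [map_sub]
      ext <;> simp [hc]
    rw [hf, hsub, apply_symm_apply]
    simp

variable {ι κ : Type*} [DecidableEq ι] {R : ι → Type*} {Q : κ → Type*}
  [∀ i, NonUnitalRing (R i)] [∀ j, NonUnitalRing (Q j)] (φ : (Π i, R i) ≃+* Π j, Q j)

def piComponent (i : ι) (j : κ) : R i →ₙ+* Q j where
  toFun x := φ (Pi.single i x) j
  map_mul' x y := by rw [Pi.single_mul, map_mul]; rfl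
  map_zero' := by simp
  map_add' x y := by rw [Pi.single_add, map_add]; rfl

theorem piComponent_apply (i : ι) (j : κ) (x : R i) : φ.piComponent i j x = φ (Pi.single i x) j :=
  rfl

theorem piComponent_mul_piComponent_of_ne {i i' : ι} (h : i ≠ i') (j : κ) (x : R i) (y : R i') :
    φ.piComponent i j x * φ.piComponent i' j y = 0 := by
  rw [piComponent_apply, piComponent_apply, ← Pi.mul_apply, ← map_mul, ← Pi.single_mul_left,
    Pi.single_eq_of_ne h, mul_zero, Pi.single_zero, map_zero, Pi.zero_apply]

theorem piComponent_mul [DecidableEq κ] {i : ι} {j : κ} (x : R i) (q : Q j) :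
    φ.piComponent i j x * q = φ.piComponent i j (x * φ.symm.piComponent j i q) := by
  rw [piComponent_apply, piComponent_apply, piComponent_apply, Pi.single_mul_left, map_mul,
    apply_symm_apply, Pi.mul_apply, Pi.single_eq_same]

theorem mul_piComponent [DecidableEq κ] {i : ι} {j : κ} (q : Q j) (x : R i) :
    q * φ.piComponent i j x = φ.piComponent i j (φ.symm.piComponent j i q * x) := by
  rw [piComponent_apply, piComponent_apply, piComponent_apply, Pi.single_mul_right, map_mul,
    apply_symm_apply, Pi.mul_apply, Pi.single_eq_same]

theorem sum_piComponent_symm_piComponent [DecidableEq κ] [Fintype κ] (i : ι) (x : R i) :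
    ∑ j, φ.symm.piComponent j i (φ.piComponent i j x) = x := by
  simp only [piComponent_apply, ← Finset.sum_apply, ← map_sum, Finset.univ_sum_single,
    symm_apply_apply, Pi.single_eq_same]

variable [DecidableEq κ]

def centroidThrough (i : ι) (j : κ) : centroid ℤ (R i) :=
  ⟨((φ.symm.piComponent j i).comp (φ.piComponent i j) : R i →+ R i).toIntLinearMap,
    mem_centroid.2 fun x y => by
      change φ.symm.piComponent j i (φ.piComponent i j (x * y)) = _ ∧
        φ.symm.piComponent j i (φ.piComponent i j (x * y)) = _
      rw [map_mul (φ.piComponent i j)]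
      exact ⟨(φ.symm.mul_piComponent x (φ.piComponent i j y)).symm,
        (φ.symm.piComponent_mul (φ.piComponent i j x) y).symm⟩⟩

theorem centroidThrough_apply (i : ι) (j : κ) (x : R i) :
    (φ.centroidThrough i j : Module.End ℤ (R i)) x = φ.symm.piComponent j i (φ.piComponent i j x) :=
  rfl

theorem sum_centroidThrough [Fintype κ] (i : ι) : ∑ j, φ.centroidThrough i j = 1 := by
  ext x
  simp only [AddSubmonoidClass.coe_finsetSum, LinearMap.coe_sum, Finset.sum_apply,
    centroidThrough_apply, sum_piComponent_symm_piComponent, OneMemClass.coe_one,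
    Module.End.one_apply]

theorem centroidThrough_mul_centroidThrough_of_ne (i : ι) {j j' : κ} (h : j ≠ j') (x y : R i) :
    (φ.centroidThrough i j : Module.End ℤ (R i)) x * (φ.centroidThrough i j' : Module.End ℤ (R i)) y
      = 0 :=
  φ.symm.piComponent_mul_piComponent_of_ne h i _ _

theorem bijective_piComponent_symm_of_inverse {i : ι} {j : κ} [Nontrivial (R i)]
    (hQ : ∀ e : centroid ℤ (Q j), IsIdempotentElem e → e = 0 ∨ e = 1)
    {d : Module.End ℤ (R i)} (hd : d ∈ centroid ℤ (R i))
    (hdc : ∀ x, d (φ.symm.piComponent j i (φ.piComponent i j x)) = x)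
    (hcd : ∀ x, φ.symm.piComponent j i (φ.piComponent i j (d x)) = x) :
    Function.Bijective (φ.symm.piComponent j i) := by
  set a := φ.piComponent i j
  set b := φ.symm.piComponent j i
  -- `ε = a ∘ d ∘ b` is an idempotent of the centroid of `Q j` with `b ∘ ε = b`, so `ε = 1`.
  let ε : centroid ℤ (Q j) :=
    ⟨(a : R i →+ Q j).toIntLinearMap ∘ₗ d ∘ₗ (b : Q j →+ R i).toIntLinearMap,
      mem_centroid.2 fun q q' => by
        change a (d (b (q * q'))) = q * a (d (b q')) ∧ a (d (b (q * q'))) = a (d (b q)) * q'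
        rw [map_mul b]
        exact ⟨(mem_centroid.1 hd _ _).1 ▸ (φ.mul_piComponent q _).symm,
          (mem_centroid.1 hd _ _).2 ▸ (φ.piComponent_mul _ q').symm⟩⟩
  have hε : ∀ q, (ε : Module.End ℤ (Q j)) q = a (d (b q)) := fun _ => rfl
  have hεε : IsIdempotentElem ε := Subtype.ext <| LinearMap.ext fun q => by
    change (ε : Module.End ℤ (Q j)) ((ε : Module.End ℤ (Q j)) q) = _
    rw [hε, hε, hcd]
  refine ⟨fun q q' hqq' => ?_, fun x => ⟨a (d x), hcd x⟩⟩
  rcases hQ ε hεε with h0 | h1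
  · obtain ⟨x, hx⟩ := exists_ne (0 : R i)
    refine (hx ?_).elim
    rw [← hdc x, ← hcd (b (a x)), ← hε, h0]
    simp
  · have hεq : ∀ q, (ε : Module.End ℤ (Q j)) q = q := fun q => by rw [h1]; rfl
    rw [← hεq q, ← hεq q', hε, hε, hqq']

theorem bijective_piComponent_symm_of_isUnit {i : ι} {j : κ} [Nontrivial (R i)]
    (hQ : ∀ e : centroid ℤ (Q j), IsIdempotentElem e → e = 0 ∨ e = 1)
    (hu : IsUnit (φ.centroidThrough i j)) : Function.Bijective (φ.symm.piComponent j i) := by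
  obtain ⟨u, hu⟩ := hu
  have happly : ∀ f g : centroid ℤ (R i), f * g = 1 → ∀ x,
      (f : Module.End ℤ (R i)) ((g : Module.End ℤ (R i)) x) = x := fun f g h x =>
    congrArg (fun f : centroid ℤ (R i) => (f : Module.End ℤ (R i)) x) h
  have hdc := happly _ _ u.inv_mul
  have hcd := happly _ _ u.mul_inv
  rw [hu] at hdc hcd
  exact bijective_piComponent_symm_of_inverse φ hQ (u⁻¹ : (centroid ℤ (R i))ˣ).1.2 hdc hcd

theorem nonempty_piSubtypeNe_of_bijective {i : ι} {j : κ}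
    (hb : Function.Bijective (φ.symm.piComponent j i)) :
    Nonempty ((Π i' : {i' // i' ≠ i}, R i') ≃+* Π j' : {j' // j' ≠ j}, Q j') := by
  refine nonempty_cancel_left (((piSplitAt i R).symm.trans φ).trans (piSplitAt j Q)) ?_
  convert hb using 1
  ext q
  simp only [symm_trans_apply, symm_symm, piSplitAt_symm_apply_zero, piComponent_apply]
  rfl

end RingEquiv

theorem RingEquiv.exists_bijective_piComponent_symm {ι κ : Type*} [DecidableEq ι] [DecidableEq κ]
    [Fintype κ] {R : ι → Type} {Q : κ → Type} [∀ i, NonUnitalRing (R i)]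
    [∀ j, NonUnitalRing (Q j)] (φ : (Π i, R i) ≃+* Π j, Q j) {i : ι}
    (hR : IsIndecomposableLattice (R i)) (hmul : ∃ x y : R i, x * y ≠ 0)
    (hQ : ∀ j, IsIndecomposableLattice (Q j)) :
    ∃ j, Function.Bijective (φ.symm.piComponent j i) := by
  have := hR.nontrivial
  obtain ⟨j, hj⟩ := hR.exists_isUnit_of_sum_eq_one hmul (φ.centroidThrough i)
    (φ.sum_centroidThrough i) fun j j' h => φ.centroidThrough_mul_centroidThrough_of_ne i h
  exact ⟨j, φ.bijective_piComponent_symm_of_isUnit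
    (fun _ => (hQ j).eq_zero_or_one_of_isIdempotentElem) hj⟩

theorem exists_equiv_of_mul_eq_zero {ι κ : Type} [Fintype ι] [Fintype κ] {R : ι → Type}
    {Q : κ → Type} [∀ i, NonUnitalRing (R i)] [∀ j, NonUnitalRing (Q j)]
    (hR : ∀ i, IsIndecomposableLattice (R i)) (hQ : ∀ j, IsIndecomposableLattice (Q j))
    (φ : (Π i, R i) ≃+* Π j, Q j) (hmul : ∀ i (x y : R i), x * y = 0) :
    ∃ σ : ι ≃ κ, ∀ i, Nonempty (R i ≃+* Q (σ i)) := by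
  classical
  have hmulQ : ∀ j (q q' : Q j), q * q' = 0 := fun j q q' => by
    have h : (Pi.single j q * Pi.single j q' : Π j, Q j) = 0 := by
      rw [← φ.apply_symm_apply (Pi.single j q), ← φ.apply_symm_apply (Pi.single j q'), ← map_mul,
        show φ.symm (Pi.single j q) * φ.symm (Pi.single j q') = 0 from funext fun i => hmul i _ _,
        map_zero]
    simpa using congrFun h j
  have := fun i => (hR i).isAddTorsionFree
  have := fun i => (hR i).finite
  have := fun j => (hQ j).isAddTorsionFree
  have := fun j => (hQ j).finite
  have hrankR := fun i => (hR i).finrank_eq_one_of_mul_eq_zero (hmul i)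
  have hrankQ := fun j => (hQ j).finrank_eq_one_of_mul_eq_zero (hmulQ j)
  have hcard : Fintype.card ι = Fintype.card κ := by
    simpa [Module.finrank_pi_fintype, hrankR, hrankQ] using
      φ.toAddEquiv.toIntLinearEquiv.finrank_eq
  refine ⟨Fintype.equivOfCardEq hcard, fun i => ⟨?_⟩⟩
  exact { LinearEquiv.ofFinrankEq (R := ℤ) _ _ ((hrankR i).trans (hrankQ _).symm) with
    map_mul' := fun x y => by simp [hmul, hmulQ] }

theorem exists_equiv_of_ringEquiv_pi {ι κ : Type} [Fintype ι] [Fintype κ] {R : ι → Type}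
    {Q : κ → Type} [∀ i, NonUnitalRing (R i)] [∀ j, NonUnitalRing (Q j)]
    (hR : ∀ i, IsIndecomposableLattice (R i)) (hQ : ∀ j, IsIndecomposableLattice (Q j))
    (φ : (Π i, R i) ≃+* Π j, Q j) : ∃ σ : ι ≃ κ, ∀ i, Nonempty (R i ≃+* Q (σ i)) := by
  classical
  induction hn : Fintype.card ι generalizing ι κ with
  | zero =>
    exact exists_equiv_of_mul_eq_zero hR hQ φ
      fun i => ((Fintype.card_eq_zero_iff.1 hn).false i).elim
  | succ n ih =>
    by_cases hmul : ∀ i (x y : R i), x * y = 0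
    · exact exists_equiv_of_mul_eq_zero hR hQ φ hmul
    obtain ⟨i, hi⟩ : ∃ i, ∃ x y : R i, x * y ≠ 0 := by simpa using hmul
    obtain ⟨j, hj⟩ := φ.exists_bijective_piComponent_symm (hR i) hi hQ
    obtain ⟨ψ⟩ := φ.nonempty_piSubtypeNe_of_bijective hj
    obtain ⟨σ, hσ⟩ := ih (R := fun i' : {i' // i' ≠ i} => R i')
      (Q := fun j' : {j' // j' ≠ j} => Q j') (fun i' => hR i') (fun j' => hQ j') ψ (by simp [hn])
    refine ⟨(Equiv.optionSubtypeNe i).symm.trans ((Equiv.optionCongr σ).trans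
      (Equiv.optionSubtypeNe j)), fun i' => ?_⟩
    by_cases h : i' = i
    · subst h
      rw [Equiv.trans_apply, Equiv.trans_apply, Equiv.optionSubtypeNe_symm_self]
      exact ⟨(RingEquiv.ofBijective _ hj).symm⟩
    · rw [Equiv.trans_apply, Equiv.trans_apply, Equiv.optionSubtypeNe_symm_of_ne h]
      exact hσ ⟨i', h⟩

theorem integral_krull_schmidt_general (n m : ℕ)
    (R : Fin n → Type) (Q : Fin m → Type)
    [∀ i, NonUnitalRing (R i)] [∀ j, NonUnitalRing (Q j)]
    (hRnt : ∀ i, Nontrivial (R i)) (hQnt : ∀ j, Nontrivial (Q j))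
    (hRtf : ∀ i, AddMonoid.IsTorsionFree (R i))
    (hQtf : ∀ j, AddMonoid.IsTorsionFree (Q j))
    (hRfg : ∀ i, AddGroup.FG (R i)) (hQfg : ∀ j, AddGroup.FG (Q j))
    (hRindQ : ∀ i, ¬ IsDecomposableAlg ℚ (ℚ ⊗[ℤ] R i))
    (hQindQ : ∀ j, ¬ IsDecomposableAlg ℚ (ℚ ⊗[ℤ] Q j))
    (hiso : Nonempty ((∀ i, R i) ≃+* (∀ j, Q j))) :
    n = m ∧ ∃ σ : Fin n ≃ Fin m, ∀ i, Nonempty (R i ≃+* Q (σ i)) := by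
  have hR : ∀ i, IsIndecomposableLattice (R i) := fun i =>
    ⟨hRnt i, .of_not_isOfFinAddOrder (hRtf i), Module.Finite.iff_addGroup_fg.2 (hRfg i), hRindQ i⟩
  have hQ : ∀ j, IsIndecomposableLattice (Q j) := fun j =>
    ⟨hQnt j, .of_not_isOfFinAddOrder (hQtf j), Module.Finite.iff_addGroup_fg.2 (hQfg j), hQindQ j⟩
  obtain ⟨φ⟩ := hiso
  obtain ⟨σ, hσ⟩ := exists_equiv_of_ringEquiv_pi hR hQ φ
  exact ⟨by simpa using Fintype.card_congr σ, σ, hσ⟩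

/-- **Integral Krull–Schmidt theorem for non-unital rings** (Corollary A.5 of the
paper). Let `R₁, …, Rₙ` and `Q₁, …, Q_m` be nonzero non-unital rings whose
additive groups are torsion-free and finitely generated. If all the base changes
`Rᵢ ⊗_ℤ ℚ`, `Qⱼ ⊗_ℤ ℚ` (here written `ℚ ⊗[ℤ] Rᵢ` etc., with the induced
multiplication `(a ⊗ x)(b ⊗ y) = ab ⊗ xy`) are indecomposable non-unital
`ℚ`-algebras and, for each prime `p`, all `Rᵢ ⊗_ℤ ℤ/p`, `Qⱼ ⊗_ℤ ℤ/p` are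
indecomposable non-unital `ℤ/p`-algebras, and if
`R₁ × ⋯ × Rₙ ≅ Q₁ × ⋯ × Q_m` as non-unital rings, then `n = m` and, after a
permutation, `Rᵢ ≅ Q_{σ(i)}` as non-unital rings. -/
theorem integral_krull_schmidt (n m : ℕ)
    (R : Fin n → Type) (Q : Fin m → Type)
    [∀ i, NonUnitalRing (R i)] [∀ j, NonUnitalRing (Q j)]
    (hRnt : ∀ i, Nontrivial (R i)) (hQnt : ∀ j, Nontrivial (Q j))
    (hRtf : ∀ i, AddMonoid.IsTorsionFree (R i))
    (hQtf : ∀ j, AddMonoid.IsTorsionFree (Q j))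
    (hRfg : ∀ i, AddGroup.FG (R i)) (hQfg : ∀ j, AddGroup.FG (Q j))
    (hRindQ : ∀ i, ¬ IsDecomposableAlg ℚ (ℚ ⊗[ℤ] R i))
    (hQindQ : ∀ j, ¬ IsDecomposableAlg ℚ (ℚ ⊗[ℤ] Q j))
    (hRindp : ∀ (p : ℕ), p.Prime → ∀ i, ¬ IsDecomposableAlg (ZMod p) (ZMod p ⊗[ℤ] R i))
    (hQindp : ∀ (p : ℕ), p.Prime → ∀ j, ¬ IsDecomposableAlg (ZMod p) (ZMod p ⊗[ℤ] Q j))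
    (hiso : Nonempty ((∀ i, R i) ≃+* (∀ j, Q j))) :
    n = m ∧ ∃ σ : Fin n ≃ Fin m, ∀ i, Nonempty (R i ≃+* Q (σ i)) :=
  integral_krull_schmidt_general n m R Q hRnt hQnt hRtf hQtf hRfg hQfg hRindQ hQindQ hiso
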